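/- Large-deadline feasibility: in the star model with waiting times, if P ≥ n·τ and d i ≥ 2·(max_j λ j) for every i, then there is a valid assignment meeting the deadlines; indeed, m i = i·τ together with w i = 2·((max_j λ j) − λ i) is such an assignment, and every route has process time exactly 2·(max_j λ j). -/

import Mathlib

/-- The set of `τ` consecutive residues modulo `P` starting at `t`. -/
def slotSet (P τ : ℕ) (t : ℤ) : Set (ZMod P) :=
  {s | ∃ k : ℕ, k < τ ∧ s = ((t + k : ℤ) : ZMod P)}

/-- Forward slot set of route `i` in the star model with waiting times. -/
def fwdSlots (n P τ : ℕ) (m : Fin n → ℤ) (i : Fin n) : Set (ZMod P) :=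
  slotSet P τ (m i)

/-- Backward slot set of route `i` in the star model with waiting times. -/
def bwdSlots (n P τ : ℕ) (lam : Fin n → ℕ) (m : Fin n → ℤ) (w : Fin n → ℕ)
    (i : Fin n) : Set (ZMod P) :=
  slotSet P τ (m i + 2 * (lam i : ℤ) + (w i : ℤ))

/-- Validity in the star model with waiting times: the forward slot sets are
pairwise disjoint and the backward slot sets are pairwise disjoint. -/
def ValidW (n P τ : ℕ) (lam : Fin n → ℕ) (m : Fin n → ℤ) (w : Fin n → ℕ) : Prop :=
  ∀ i j : Fin n, i ≠ j →
    Disjoint (fwdSlots n P τ m i) (fwdSlots n P τ m j) ∧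
    Disjoint (bwdSlots n P τ lam m w i) (bwdSlots n P τ lam m w j)

/-- The process time of route `i`: `2·λ i + w i`. -/
def procTime (n : ℕ) (lam : Fin n → ℕ) (w : Fin n → ℕ) (i : Fin n) : ℕ :=
  2 * lam i + w i

/-!
Route `i` gets the block of slots `[i·τ, (i+1)·τ)`; since `n·τ ≤ P` these `n` blocks do not
wrap around modulo `P`, so they are pairwise disjoint. The waiting times pad every route to the
same process time `2·max λ`, so each backward slot set is the forward one shifted by the common
constant `2·max λ`, and is pairwise disjoint for the same reason.
-/

theorem disjoint_slotSet_of_le {P τ : ℕ} {s t : ℤ} (hst : s + τ ≤ t) (hts : t + τ ≤ s + P) :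
    Disjoint (slotSet P τ s) (slotSet P τ t) := by
  rw [Set.disjoint_left]
  rintro _ ⟨k, hk, rfl⟩ ⟨l, hl, he⟩
  have hdvd : (P : ℤ) ∣ (t + l) - (s + k) := (ZMod.intCast_eq_intCast_iff_dvd_sub _ _ _).mp he
  have hzero := Int.eq_zero_of_dvd_of_nonneg_of_lt (by omega) (by omega) hdvd
  omega

theorem disjoint_slotSet_mul_add {n P τ : ℕ} (hPn : n * τ ≤ P) (c : ℤ) {i j : ℕ}
    (hi : i < n) (hj : j < n) (hij : i ≠ j) :
    Disjoint (slotSet P τ (i * τ + c)) (slotSet P τ (j * τ + c)) := by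
  wlog hlt : i < j generalizing i j
  · exact (this hj hi hij.symm (by omega)).symm
  have hnext : ((i + 1) * τ : ℤ) ≤ j * τ := by gcongr; omega
  have hlast : ((j + 1) * τ : ℤ) ≤ n * τ := by gcongr; omega
  have hP : (n * τ : ℤ) ≤ P := by exact_mod_cast hPn
  apply disjoint_slotSet_of_le <;> nlinarith

theorem bwdSlots_eq_slotSet_add_procTime (n P τ : ℕ) (lam : Fin n → ℕ) (m : Fin n → ℤ)
    (w : Fin n → ℕ) (i : Fin n) :
    bwdSlots n P τ lam m w i = slotSet P τ (m i + procTime n lam w i) := by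
  simp only [bwdSlots, procTime]
  push_cast
  ring_nf

theorem procTime_pad_to_sup {n : ℕ} (lam : Fin n → ℕ) (i : Fin n) :
    procTime n lam (fun i => 2 * (Finset.univ.sup lam - lam i)) i = 2 * Finset.univ.sup lam := by
  have hle : lam i ≤ Finset.univ.sup lam := Finset.le_sup (Finset.mem_univ i)
  simp only [procTime]
  omega

theorem large_deadline_feasibility_general (n P τ : ℕ)
    (lam d : Fin n → ℕ) (hPn : n * τ ≤ P)
    (hd : ∀ i : Fin n, 2 * Finset.univ.sup lam ≤ d i) :
    ValidW n P τ lam (fun i => ((i : ℕ) * τ : ℤ))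
        (fun i => 2 * (Finset.univ.sup lam - lam i)) ∧
    (∀ i : Fin n,
        procTime n lam (fun i => 2 * (Finset.univ.sup lam - lam i)) i ≤ d i) ∧
    (∀ i : Fin n,
        procTime n lam (fun i => 2 * (Finset.univ.sup lam - lam i)) i =
          2 * Finset.univ.sup lam) := by
  have hpt := procTime_pad_to_sup lam
  refine ⟨fun i j hij => ⟨?_, ?_⟩, fun i => (hpt i).le.trans (hd i), hpt⟩
  · simpa [fwdSlots] using
      disjoint_slotSet_mul_add hPn 0 i.isLt j.isLt (Fin.val_ne_of_ne hij)
  · simp only [bwdSlots_eq_slotSet_add_procTime, hpt]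
    exact disjoint_slotSet_mul_add hPn _ i.isLt j.isLt (Fin.val_ne_of_ne hij)

/-- Large-deadline feasibility: if `P ≥ n·τ` and all deadlines are at least
twice the maximal latency, then `m i = i·τ` with `w i = 2·(max λ − λ i)` is a
valid assignment meeting the deadlines, and every route has process time
exactly twice the maximal latency. -/
theorem large_deadline_feasibility (n P τ : ℕ) (hn : 1 ≤ n) (hP : 1 ≤ P)
    (hτ : 1 ≤ τ) (lam d : Fin n → ℕ) (hPn : n * τ ≤ P)
    (hd : ∀ i : Fin n, 2 * Finset.univ.sup lam ≤ d i) :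
    ValidW n P τ lam (fun i => ((i : ℕ) * τ : ℤ))
        (fun i => 2 * (Finset.univ.sup lam - lam i)) ∧
    (∀ i : Fin n,
        procTime n lam (fun i => 2 * (Finset.univ.sup lam - lam i)) i ≤ d i) ∧
    (∀ i : Fin n,
        procTime n lam (fun i => 2 * (Finset.univ.sup lam - lam i)) i =
          2 * Finset.univ.sup lam) :=
  large_deadline_feasibility_general n P τ lam d hPn hd
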